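/- Let V : H₁ → H₂ be a partial isometry with H_k ⊆ J_k, and let T : J₁ → J₂ be a contraction. Then T is a contractive extension of V (i.e. T V*V = V) if and only if T* is a contractive extension of V* (i.e. T* V V* = V*). -/
import Mathlib

open ContinuousLinearMap
open scoped InnerProductSpace

section Aux
variable {J₁ J₂ : Type*}
  [NormedAddCommGroup J₁] [InnerProductSpace ℂ J₁] [CompleteSpace J₁]
  [NormedAddCommGroup J₂] [InnerProductSpace ℂ J₂] [CompleteSpace J₂]

private lemma adjoint_P_eq (V : J₁ →L[ℂ] J₂) :
    adjoint ((adjoint V) ∘L V) = (adjoint V) ∘L V := by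
  rw [adjoint_comp, adjoint_adjoint]

/-- From idempotency of `V*V` we get `V (V*V) = V`. -/
private lemma VP_eq (V : J₁ →L[ℂ] J₂) (hV : IsIdempotentElem ((adjoint V) ∘L V)) :
    V ∘L ((adjoint V) ∘L V) = V := by
  set P : J₁ →L[ℂ] J₁ := (adjoint V) ∘L V with hPdef
  have hQ' : (P - 1) ∘L (P ∘L (P - 1)) = 0 := by
    have hQ : (P - 1) * (P * (P - 1)) = 0 := by
      have hVV : P * P = P := hV
      rw [mul_sub, mul_one, hVV, sub_self, mul_zero]
    rw [← mul_def, ← mul_def]; exact hQ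
  have hadjA : adjoint (V ∘L (P - 1)) = (P - 1) ∘L adjoint V := by
    rw [adjoint_comp, map_sub, hPdef, adjoint_P_eq]
    congr 1
    rw [one_def, adjoint_id, ← one_def]
  have key : adjoint (V ∘L (P - 1)) ∘L (V ∘L (P - 1)) = 0 := by
    rw [hadjA, comp_assoc, ← comp_assoc (adjoint V) V (P - 1), ← hPdef]
    exact hQ'
  have hA0 : V ∘L (P - 1) = 0 := by
    ext x
    have h1 : (⟪(V ∘L (P - 1)) x, (V ∘L (P - 1)) x⟫_ℂ) = 0 := by
      rw [← adjoint_inner_left, ← comp_apply, key]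
      simp
    simpa using inner_self_eq_zero.mp h1
  have h2 : V ∘L P - V = V ∘L (P - 1) := by rw [comp_sub, one_def, comp_id]
  exact sub_eq_zero.mp (h2.trans hA0)

/-- Main direction: if `T (V*V) = V` then `T* (V V*) = V*`. -/
private lemma main_dir (V T : J₁ →L[ℂ] J₂)
    (hV : IsIdempotentElem ((adjoint V) ∘L V)) (hT : ‖T‖ ≤ 1)
    (h : T ∘L ((adjoint V) ∘L V) = V) :
    (adjoint T) ∘L (V ∘L (adjoint V)) = adjoint V := by
  have hPsa := adjoint_P_eq V
  have hPP : ((adjoint V) ∘L V) ∘L ((adjoint V) ∘L V) = (adjoint V) ∘L V := hV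
  have hVP : V ∘L ((adjoint V) ∘L V) = V := VP_eq V hV
  have hTV : (adjoint T) ∘L V = (adjoint V) ∘L V := by
    ext y
    have hTP : T (((adjoint V) ∘L V) y) = V y := by
      conv_rhs => rw [← h]
      rfl
    have h1 : ‖((adjoint V) ∘L V) y‖ ^ 2 = ‖V y‖ ^ 2 := by
      rw [apply_norm_sq_eq_inner_adjoint_left V y,
        apply_norm_sq_eq_inner_adjoint_left ((adjoint V) ∘L V) y, hPsa, hPP]
    have hnorm : ‖((adjoint V) ∘L V) y‖ = ‖V y‖ := by
      rw [← Real.sqrt_sq (norm_nonneg (((adjoint V) ∘L V) y)),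
        ← Real.sqrt_sq (norm_nonneg (V y)), h1]
    have hle : ‖(adjoint T) (V y)‖ ≤ ‖V y‖ := by
      calc ‖(adjoint T) (V y)‖ ≤ ‖adjoint T‖ * ‖V y‖ := le_opNorm _ _
        _ ≤ 1 * ‖V y‖ := by
            apply mul_le_mul_of_nonneg_right _ (norm_nonneg _)
            rw [LinearIsometryEquiv.norm_map]; exact hT
        _ = ‖V y‖ := one_mul _
    have hinner : RCLike.re (⟪(adjoint T) (V y), ((adjoint V) ∘L V) y⟫_ℂ)
        = ‖V y‖ ^ 2 := by
      rw [adjoint_inner_left, hTP, inner_self_eq_norm_sq]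
    have hzero : ‖(adjoint T) (V y) - ((adjoint V) ∘L V) y‖ ^ 2 ≤ 0 := by
      rw [@norm_sub_sq ℂ, hinner, hnorm]
      have h6 : ‖(adjoint T) (V y)‖ ^ 2 ≤ ‖V y‖ ^ 2 :=
        pow_le_pow_left₀ (norm_nonneg _) hle 2
      linarith
    have hz : (adjoint T) (V y) - ((adjoint V) ∘L V) y = 0 := by
      have h4 : ‖(adjoint T) (V y) - ((adjoint V) ∘L V) y‖ ^ 2 = 0 :=
        le_antisymm hzero (sq_nonneg _)
      exact norm_eq_zero.mp (sq_eq_zero_iff.mp h4)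
    have := sub_eq_zero.mp hz
    simpa [comp_apply] using this
  calc (adjoint T) ∘L (V ∘L (adjoint V))
      = ((adjoint T) ∘L V) ∘L adjoint V := (comp_assoc _ _ _).symm
    _ = ((adjoint V) ∘L V) ∘L adjoint V := by rw [hTV]
    _ = adjoint V := by
        have h5 := congrArg adjoint hVP
        rwa [adjoint_comp, hPsa] at h5

end Aux

theorem stmt_1 {J₁ J₂ : Type*}
    [NormedAddCommGroup J₁] [InnerProductSpace ℂ J₁] [CompleteSpace J₁]
    [NormedAddCommGroup J₂] [InnerProductSpace ℂ J₂] [CompleteSpace J₂]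
    (V T : J₁ →L[ℂ] J₂)
    (hV : IsIdempotentElem ((adjoint V) ∘L V)) (hT : ‖T‖ ≤ 1) :
    T ∘L ((adjoint V) ∘L V) = V ↔ (adjoint T) ∘L (V ∘L (adjoint V)) = adjoint V := by
  constructor
  · exact main_dir V T hV hT
  · intro h
    have hVP := VP_eq V hV
    have hV' : IsIdempotentElem ((adjoint (adjoint V)) ∘L (adjoint V)) := by
      show (adjoint (adjoint V) ∘L adjoint V) ∘L (adjoint (adjoint V) ∘L adjoint V)
        = adjoint (adjoint V) ∘L adjoint V
      rw [adjoint_adjoint]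
      calc (V ∘L adjoint V) ∘L (V ∘L adjoint V)
          = (V ∘L ((adjoint V) ∘L V)) ∘L adjoint V := by
            rw [comp_assoc, comp_assoc, comp_assoc]
        _ = V ∘L adjoint V := by rw [hVP]
    have hT' : ‖adjoint T‖ ≤ 1 := by rw [LinearIsometryEquiv.norm_map]; exact hT
    have h' : (adjoint T) ∘L ((adjoint (adjoint V)) ∘L (adjoint V)) = adjoint V := by
      rwa [adjoint_adjoint]
    have h6 := main_dir (adjoint V) (adjoint T) hV' hT' h'
    rwa [adjoint_adjoint, adjoint_adjoint] at h6
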